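/- arXiv:0707.4085 — 2 statements merged into one kernel-verified Lean document; each statement's English description precedes it below -/
import Mathlib

section
/- Let G and H be graphs on disjoint vertex sets, and let G₀ and H₀ be induced subgraphs of G and H with α(G₀) = α(G) − 1 and α(H₀) = α(H) − 1. Let G₁ be the graph obtained from G by adding one new vertex adjacent to every vertex of V(G)∖V(G₀) (that is, G₁ = j(G,G₀,K₁,∅) where K₁ is the one-vertex graph and its distinguished induced subgraph is empty), and let H₁ be defined from H and H₀ analogously. Then the 1-join J = j(G,G₀,H,H₀) is an α-critical graph if and only if both G₁ and H₁ are α-critical graphs. -/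
/-!
By counting how a stable set splits between the two sides,
`α(j(G, G₀, H, H₀)) = max (α(G) + α(H₀)) (α(G₀) + α(H))`, which under the hypotheses is
`α(G₀) + α(H₀) + 1`. The same formula holds after deleting an edge of `G`, and with `H = K₁`,
`H₀ = ∅` it computes `α(G₁)`; the two values always differ by the constant `α(H₀)`, so an edge
of `G` is α-critical in `J` iff it is α-critical in `G₁`. Deleting a cross edge `xy` only admits
the new stable sets containing both `x` and `y`, so
`α(J - xy) = max (α(J)) (α(G₀ + x) + α(H₀ + y))`, where `G₀ + x` is induced on `V(G₀) ∪ {x}`.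
Hence `xy` is α-critical iff `α(G₀ + x) = α(G₀) + 1` and `α(H₀ + y) = α(H₀) + 1`, and in `G₁`
the second condition is automatic.
-/

open SimpleGraph

/-- The stability (independence) number of the subgraph of `G` induced on the
vertex set `S`: the maximum cardinality of a stable (independent) subset of `S`. -/
noncomputable def alphaOn {V : Type*} [Fintype V] (G : SimpleGraph V) (S : Set V) : ℕ :=
  sSup {n | ∃ s : Finset V, ↑s ⊆ S ∧ (∀ u ∈ s, ∀ v ∈ s, ¬ G.Adj u v) ∧ s.card = n}

/-- The stability (independence) number `α(G)` of `G`. -/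
noncomputable def alphaNum {V : Type*} [Fintype V] (G : SimpleGraph V) : ℕ :=
  alphaOn G Set.univ

/-- The edge `{u, v}` of `G` is an α-critical edge: deleting it increases the
stability number by one. -/
def IsCriticalEdge {V : Type*} [Fintype V] (G : SimpleGraph V) (u v : V) : Prop :=
  G.Adj u v ∧ alphaNum (G.deleteEdges {s(u, v)}) = alphaNum G + 1

/-- `G` is an α-critical graph: every edge is α-critical. -/
def IsAlphaCritical {V : Type*} [Fintype V] (G : SimpleGraph V) : Prop :=
  ∀ u v, G.Adj u v → alphaNum (G.deleteEdges {s(u, v)}) = alphaNum G + 1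

/-- `S` induces a maximal induced subgraph of `G` with stability number `α(G) - 1`:
`α(G[S]) = α(G) - 1` and adding any further vertex raises the stability number to `α(G)`. -/
def IsMaxAlphaSub {V : Type*} [Fintype V] (G : SimpleGraph V) (S : Set V) : Prop :=
  alphaOn G S + 1 = alphaNum G ∧ ∀ w ∉ S, alphaOn G (insert w S) = alphaNum G

/-- The 1-join `j(G, G₀, H, H₀)` of `G` and `H`, where `A = V(G₀)` and `B = V(H₀)`:
the disjoint union of `G` and `H` together with all edges between `V(G) ∖ A` and
`V(H) ∖ B`. -/
def oneJoin {α β : Type*} (G : SimpleGraph α) (H : SimpleGraph β)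
    (A : Set α) (B : Set β) : SimpleGraph (α ⊕ β) :=
  SimpleGraph.fromRel (fun x y =>
    (∃ a b, x = Sum.inl a ∧ y = Sum.inl b ∧ G.Adj a b) ∨
    (∃ a b, x = Sum.inr a ∧ y = Sum.inr b ∧ H.Adj a b) ∨
    (∃ a b, x = Sum.inl a ∧ y = Sum.inr b ∧ a ∉ A ∧ b ∉ B))

/-- The edge-vertex composition `c(G, e, H, v)` with `e = {v₁, v₂}` and
`N_H(v) = U₁ ⊔ U₂`: vertex set `V(G) ⊔ (V(H) ∖ {v})`, edge set
`(E(G) ∖ {e}) ∪ E(H - v) ∪ {v₁u : u ∈ U₁} ∪ {v₂u : u ∈ U₂}`. -/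
def evComp {α β : Type*} (G : SimpleGraph α) (v₁ v₂ : α) (H : SimpleGraph β) (v : β)
    (U₁ U₂ : Set β) : SimpleGraph (α ⊕ {b : β // b ≠ v}) :=
  SimpleGraph.fromRel (fun x y =>
    (∃ a b, x = Sum.inl a ∧ y = Sum.inl b ∧ G.Adj a b ∧ s(a, b) ≠ s(v₁, v₂)) ∨
    (∃ a b : {b : β // b ≠ v}, x = Sum.inr a ∧ y = Sum.inr b ∧ H.Adj a b) ∨
    (∃ b : {b : β // b ≠ v}, x = Sum.inl v₁ ∧ y = Sum.inr b ∧ (b : β) ∈ U₁) ∨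
    (∃ b : {b : β // b ≠ v}, x = Sum.inl v₂ ∧ y = Sum.inr b ∧ (b : β) ∈ U₂))

/-- The splitting `s(H, v)` of the vertex `v` of `H`, with `N_H(v) = N₁ ⊔ N₂`.
The new vertices `v′`, `v″`, `u` are represented by `Sum.inr 0`, `Sum.inr 1`,
`Sum.inr 2` respectively. -/
def splitting {β : Type*} (H : SimpleGraph β) (v : β) (N₁ N₂ : Set β) :
    SimpleGraph ({b : β // b ≠ v} ⊕ Fin 3) :=
  SimpleGraph.fromRel (fun x y =>
    (∃ a b : {b : β // b ≠ v}, x = Sum.inl a ∧ y = Sum.inl b ∧ H.Adj a b) ∨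
    (∃ a : {b : β // b ≠ v}, x = Sum.inl a ∧ y = Sum.inr 0 ∧ (a : β) ∈ N₁) ∨
    (∃ a : {b : β // b ≠ v}, x = Sum.inl a ∧ y = Sum.inr 1 ∧ (a : β) ∈ N₂) ∨
    (x = Sum.inr 0 ∧ y = Sum.inr 2) ∨ (x = Sum.inr 1 ∧ y = Sum.inr 2))

/-- The duplication `d(G, v)` of the vertex `v` of `G`: a new vertex `v′`
(represented by `Sum.inr ()`) is added, adjacent exactly to the closed
neighborhood `N_G[v]`. -/
def duplication {α : Type*} (G : SimpleGraph α) (v : α) : SimpleGraph (α ⊕ Unit) :=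
  SimpleGraph.fromRel (fun x y =>
    (∃ a b, x = Sum.inl a ∧ y = Sum.inl b ∧ G.Adj a b) ∨
    (∃ a, x = Sum.inl a ∧ y = Sum.inr () ∧ a ∈ insert v (G.neighborSet v)))

/-- A graph is duplication free iff it contains no pair of adjacent vertices
with equal closed neighborhoods. -/
def DuplicationFree {α : Type*} (G : SimpleGraph α) : Prop :=
  ∀ u v, G.Adj u v → insert u (G.neighborSet u) ≠ insert v (G.neighborSet v)

/-- `G` is 2-connected: it has at least three vertices and the deletion of any
single vertex leaves it connected. -/
def TwoConnected {V : Type*} [Fintype V] (G : SimpleGraph V) : Prop :=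
  3 ≤ Fintype.card V ∧ ∀ x : V, (G.induce {x}ᶜ).Connected

open Sum

lemma indep_or_adj_of_indep_deleteEdges {V : Type*} {G : SimpleGraph V} {s : Finset V} {u v : V}
    (hi : ∀ a ∈ s, ∀ b ∈ s, ¬ (G.deleteEdges {s(u, v)}).Adj a b) :
    (∀ a ∈ s, ∀ b ∈ s, ¬ G.Adj a b) ∨ (G.Adj u v ∧ u ∈ s ∧ v ∈ s) := by
  by_contra! h
  obtain ⟨⟨a, ha, b, hb, hab⟩, huv⟩ := h
  refine hi a ha b hb ((deleteEdges_adj ..).2 ⟨hab, ?_⟩)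
  simp only [Set.mem_singleton_iff, Sym2.eq_iff]
  rintro (⟨rfl, rfl⟩ | ⟨rfl, rfl⟩)
  exacts [huv hab ha hb, huv hab.symm hb ha]

section alphaOn

variable {V : Type*} [Fintype V] {G G' : SimpleGraph V} {S : Set V}

lemma bddAbove_alphaOn_set (G : SimpleGraph V) (S : Set V) :
    BddAbove {n | ∃ s : Finset V, ↑s ⊆ S ∧ (∀ u ∈ s, ∀ v ∈ s, ¬ G.Adj u v) ∧ s.card = n} :=
  ⟨Fintype.card V, by
    rintro _ ⟨s, -, -, rfl⟩
    exact s.card_le_univ⟩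

lemma le_alphaOn {s : Finset V} (hs : ↑s ⊆ S) (hi : ∀ u ∈ s, ∀ v ∈ s, ¬ G.Adj u v) :
    s.card ≤ alphaOn G S :=
  le_csSup (bddAbove_alphaOn_set G S) ⟨s, hs, hi, rfl⟩

lemma exists_card_eq_alphaOn (G : SimpleGraph V) (S : Set V) :
    ∃ s : Finset V, ↑s ⊆ S ∧ (∀ u ∈ s, ∀ v ∈ s, ¬ G.Adj u v) ∧ s.card = alphaOn G S :=
  Nat.sSup_mem (s := {n | ∃ s : Finset V, (s : Set V) ⊆ S ∧ (∀ u ∈ s, ∀ v ∈ s, ¬ G.Adj u v) ∧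
    s.card = n}) ⟨0, ∅, by simp⟩ (bddAbove_alphaOn_set G S)

lemma alphaOn_le {n : ℕ}
    (h : ∀ s : Finset V, ↑s ⊆ S → (∀ u ∈ s, ∀ v ∈ s, ¬ G.Adj u v) → s.card ≤ n) :
    alphaOn G S ≤ n := by
  obtain ⟨s, hs, hi, hc⟩ := exists_card_eq_alphaOn G S
  exact hc ▸ h s hs hi

lemma alphaOn_anti (h : G ≤ G') : alphaOn G' S ≤ alphaOn G S :=
  alphaOn_le fun _ hs hi => le_alphaOn hs fun u hu v hv huv => hi u hu v hv (h huv)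

lemma alphaOn_insert_le (w : V) : alphaOn G (insert w S) ≤ alphaOn G S + 1 := by
  classical
  refine alphaOn_le fun s hs hi => ?_
  have herase : ↑(s.erase w) ⊆ S := fun x hx => by
    simp only [Finset.coe_erase, Set.mem_sdiff, Set.mem_singleton_iff] at hx
    exact (hs hx.1).resolve_left hx.2
  have := le_alphaOn herase fun u hu v hv =>
    hi u (Finset.mem_of_mem_erase hu) v (Finset.mem_of_mem_erase hv)
  have := Finset.pred_card_le_card_erase (a := w) (s := s)
  omega

@[simp] lemma alphaOn_empty : alphaOn G ∅ = 0 :=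
  Nat.le_zero.1 <| alphaOn_le fun s hs _ => by simp_all

lemma exists_notMem_of_alphaOn_add_one_eq (h : alphaOn G S + 1 = alphaNum G) : ∃ x, x ∉ S := by
  by_contra! hS
  rw [Set.eq_univ_of_forall hS, ← alphaNum] at h
  omega

end alphaOn

lemma alphaOn_bot_unit_singleton (u : Unit) : alphaOn (⊥ : SimpleGraph Unit) {u} = 1 :=
  le_antisymm (alphaOn_le fun s _ _ => by simpa using s.card_le_univ)
    (le_alphaOn (s := {u}) (by simp) (by simp))

lemma alphaNum_bot_unit : alphaNum (⊥ : SimpleGraph Unit) = 1 := by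
  rw [alphaNum, Set.univ_unique]
  exact alphaOn_bot_unit_singleton _

section oneJoin

variable {α β : Type*} {G : SimpleGraph α} {H : SimpleGraph β} {A : Set α} {B : Set β}

@[simp] lemma oneJoin_adj_inl_inl {a b : α} :
    (oneJoin G H A B).Adj (inl a) (inl b) ↔ G.Adj a b := by
  simpa [oneJoin, adj_comm] using fun h => h.ne

@[simp] lemma oneJoin_adj_inr_inr {a b : β} :
    (oneJoin G H A B).Adj (inr a) (inr b) ↔ H.Adj a b := by
  simpa [oneJoin, adj_comm] using fun h => h.ne

@[simp] lemma oneJoin_adj_inl_inr {a : α} {b : β} :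
    (oneJoin G H A B).Adj (inl a) (inr b) ↔ a ∉ A ∧ b ∉ B := by
  simp [oneJoin]

@[simp] lemma oneJoin_adj_inr_inl {a : α} {b : β} :
    (oneJoin G H A B).Adj (inr b) (inl a) ↔ a ∉ A ∧ b ∉ B := by
  rw [adj_comm, oneJoin_adj_inl_inr]

lemma oneJoin_deleteEdges_inl (a b : α) :
    (oneJoin G H A B).deleteEdges {s(inl a, inl b)} = oneJoin (G.deleteEdges {s(a, b)}) H A B := by
  ext (u | u) (v | v) <;> simp

lemma oneJoin_deleteEdges_inr (a b : β) :
    (oneJoin G H A B).deleteEdges {s(inr a, inr b)} = oneJoin G (H.deleteEdges {s(a, b)}) A B := by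
  ext (u | u) (v | v) <;> simp

end oneJoin

section alphaNum_oneJoin

variable {α β : Type*} [Fintype α] [Fintype β]
  {G : SimpleGraph α} {H : SimpleGraph β} {A : Set α} {B : Set β}

lemma card_le_alphaOn_add_alphaOn {J : SimpleGraph (α ⊕ β)} {S : Set α} {T : Set β}
    {s : Finset (α ⊕ β)} (hG : ∀ a b, G.Adj a b → J.Adj (inl a) (inl b))
    (hH : ∀ a b, H.Adj a b → J.Adj (inr a) (inr b)) (hi : ∀ u ∈ s, ∀ v ∈ s, ¬ J.Adj u v)
    (hS : ↑s.toLeft ⊆ S) (hT : ↑s.toRight ⊆ T) :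
    s.card ≤ alphaOn G S + alphaOn H T := by
  rw [← Finset.card_toLeft_add_card_toRight]
  refine add_le_add (le_alphaOn hS fun a ha b hb hab => ?_) (le_alphaOn hT fun a ha b hb hab => ?_)
  · exact hi _ (Finset.mem_toLeft.1 ha) _ (Finset.mem_toLeft.1 hb) (hG a b hab)
  · exact hi _ (Finset.mem_toRight.1 ha) _ (Finset.mem_toRight.1 hb) (hH a b hab)

lemma alphaOn_add_alphaOn_le_alphaNum {J : SimpleGraph (α ⊕ β)} {S : Set α} {T : Set β}
    (hG : ∀ a b, J.Adj (inl a) (inl b) → G.Adj a b)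
    (hH : ∀ a b, J.Adj (inr a) (inr b) → H.Adj a b)
    (hST : ∀ a ∈ S, ∀ b ∈ T, ¬ J.Adj (inl a) (inr b)) :
    alphaOn G S + alphaOn H T ≤ alphaNum J := by
  obtain ⟨s, hsS, hsi, hs⟩ := exists_card_eq_alphaOn G S
  obtain ⟨t, htT, hti, ht⟩ := exists_card_eq_alphaOn H T
  rw [← hs, ← ht, ← Finset.card_disjSum]
  refine le_alphaOn (Set.subset_univ _) ?_
  rintro (a | a) hu (b | b) hv hab <;>
    simp only [Finset.inl_mem_disjSum, Finset.inr_mem_disjSum] at hu hv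
  · exact hsi a hu b hv (hG a b hab)
  · exact hST a (hsS hu) b (htT hv) hab
  · exact hST b (hsS hv) a (htT hu) hab.symm
  · exact hti a hu b hv (hH a b hab)

lemma alphaNum_oneJoin :
    alphaNum (oneJoin G H A B) = max (alphaNum G + alphaOn H B) (alphaOn G A + alphaNum H) := by
  refine le_antisymm (alphaOn_le fun s _ hi => ?_) (max_le ?_ ?_)
  · have hG : ∀ a b, G.Adj a b → (oneJoin G H A B).Adj (inl a) (inl b) :=
      fun _ _ => oneJoin_adj_inl_inl.2
    have hH : ∀ a b, H.Adj a b → (oneJoin G H A B).Adj (inr a) (inr b) :=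
      fun _ _ => oneJoin_adj_inr_inr.2
    by_cases hA : ↑s.toLeft ⊆ A
    · exact (card_le_alphaOn_add_alphaOn hG hH hi hA (Set.subset_univ _)).trans
        (le_max_right _ _)
    · obtain ⟨a, ha, haA⟩ := Set.not_subset.1 hA
      have hB : ↑s.toRight ⊆ B := fun b hb => by_contra fun hbB =>
        hi _ (Finset.mem_toLeft.1 ha) _ (Finset.mem_toRight.1 hb) (oneJoin_adj_inl_inr.2 ⟨haA, hbB⟩)
      exact (card_le_alphaOn_add_alphaOn hG hH hi (Set.subset_univ _) hB).trans
        (le_max_left _ _)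
  · exact alphaOn_add_alphaOn_le_alphaNum (fun _ _ => oneJoin_adj_inl_inl.1)
      (fun _ _ => oneJoin_adj_inr_inr.1) fun _ _ _ hb h => (oneJoin_adj_inl_inr.1 h).2 hb
  · exact alphaOn_add_alphaOn_le_alphaNum (fun _ _ => oneJoin_adj_inl_inl.1)
      (fun _ _ => oneJoin_adj_inr_inr.1) fun _ ha _ _ h => (oneJoin_adj_inl_inr.1 h).1 ha

lemma alphaNum_deleteEdges_oneJoin_inl_inr (x : α) (y : β) :
    alphaNum ((oneJoin G H A B).deleteEdges {s(inl x, inr y)}) =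
      max (alphaNum (oneJoin G H A B)) (alphaOn G (insert x A) + alphaOn H (insert y B)) := by
  refine le_antisymm (alphaOn_le fun s _ hi => ?_) (max_le (alphaOn_anti (deleteEdges_le _)) ?_)
  · rcases indep_or_adj_of_indep_deleteEdges hi with hJ | ⟨hxy, hx, hy⟩
    · exact (le_alphaOn (Set.subset_univ _) hJ).trans (le_max_left _ _)
    · rw [oneJoin_adj_inl_inr] at hxy
      have hS : ↑s.toLeft ⊆ insert x A := fun a ha => by
        by_contra h
        simp only [Set.mem_insert_iff, not_or] at h
        exact hi _ (Finset.mem_toLeft.1 ha) _ hy (by simp [h.1, h.2, hxy.2])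
      have hT : ↑s.toRight ⊆ insert y B := fun b hb => by
        by_contra h
        simp only [Set.mem_insert_iff, not_or] at h
        exact hi _ hx _ (Finset.mem_toRight.1 hb) (by simpa [h.2, hxy.1] using h.1)
      refine (card_le_alphaOn_add_alphaOn (fun a b hab => ?_) (fun a b hab => ?_) hi hS hT).trans
        (le_max_right _ _) <;> simpa
  · refine alphaOn_add_alphaOn_le_alphaNum (fun _ _ h => oneJoin_adj_inl_inl.1 h.1)
      (fun _ _ h => oneJoin_adj_inr_inr.1 h.1) ?_
    rintro a (rfl | ha) b (rfl | hb) h <;> simp_all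

end alphaNum_oneJoin

section critical

variable {α β : Type*} [Fintype α] [Fintype β]
  {G : SimpleGraph α} {H : SimpleGraph β} {A : Set α} {B : Set β}

lemma alphaNum_oneJoin_eq_add_of_right (hB : alphaOn H B + 1 = alphaNum H) (G : SimpleGraph α) :
    alphaNum (oneJoin G H A B) =
      alphaNum (oneJoin G (⊥ : SimpleGraph Unit) A ∅) + alphaOn H B := by
  rw [alphaNum_oneJoin, alphaNum_oneJoin, alphaOn_empty, alphaNum_bot_unit]
  omega

lemma alphaNum_oneJoin_eq_add_of_left (hA : alphaOn G A + 1 = alphaNum G) (H : SimpleGraph β) :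
    alphaNum (oneJoin G H A B) =
      alphaNum (oneJoin H (⊥ : SimpleGraph Unit) B ∅) + alphaOn G A := by
  rw [alphaNum_oneJoin, alphaNum_oneJoin, alphaOn_empty, alphaNum_bot_unit]
  omega

lemma isCriticalEdge_oneJoin_inl_inl_iff (hB : alphaOn H B + 1 = alphaNum H) (a b : α) :
    IsCriticalEdge (oneJoin G H A B) (inl a) (inl b) ↔
      IsCriticalEdge (oneJoin G (⊥ : SimpleGraph Unit) A ∅) (inl a) (inl b) := by
  simp only [IsCriticalEdge, oneJoin_adj_inl_inl, oneJoin_deleteEdges_inl,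
    alphaNum_oneJoin_eq_add_of_right hB]
  exact and_congr_right fun _ => by omega

lemma isCriticalEdge_oneJoin_inr_inr_iff (hA : alphaOn G A + 1 = alphaNum G) (a b : β) :
    IsCriticalEdge (oneJoin G H A B) (inr a) (inr b) ↔
      IsCriticalEdge (oneJoin H (⊥ : SimpleGraph Unit) B ∅) (inl a) (inl b) := by
  simp only [IsCriticalEdge, oneJoin_adj_inr_inr, oneJoin_adj_inl_inl, oneJoin_deleteEdges_inr,
    oneJoin_deleteEdges_inl, alphaNum_oneJoin_eq_add_of_left hA]
  exact and_congr_right fun _ => by omega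

lemma isCriticalEdge_oneJoin_inl_inr_iff_alphaOn (hA : alphaOn G A + 1 = alphaNum G)
    (hB : alphaOn H B + 1 = alphaNum H) (x : α) (y : β) :
    IsCriticalEdge (oneJoin G H A B) (inl x) (inr y) ↔
      (x ∉ A ∧ alphaOn G (insert x A) = alphaOn G A + 1) ∧
        (y ∉ B ∧ alphaOn H (insert y B) = alphaOn H B + 1) := by
  have hx := alphaOn_insert_le (G := G) (S := A) x
  have hy := alphaOn_insert_le (G := H) (S := B) y
  rw [IsCriticalEdge, alphaNum_deleteEdges_oneJoin_inl_inr, alphaNum_oneJoin,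
    oneJoin_adj_inl_inr, and_and_and_comm]
  exact and_congr_right fun _ => by omega

lemma isCriticalEdge_oneJoin_inl_inr_iff (hA : alphaOn G A + 1 = alphaNum G)
    (hB : alphaOn H B + 1 = alphaNum H) (x : α) (y : β) :
    IsCriticalEdge (oneJoin G H A B) (inl x) (inr y) ↔
      IsCriticalEdge (oneJoin G (⊥ : SimpleGraph Unit) A ∅) (inl x) (inr ()) ∧
        IsCriticalEdge (oneJoin H (⊥ : SimpleGraph Unit) B ∅) (inl y) (inr ()) := by
  have hK : alphaOn (⊥ : SimpleGraph Unit) ∅ + 1 = alphaNum (⊥ : SimpleGraph Unit) := by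
    rw [alphaOn_empty, alphaNum_bot_unit]
  simp only [isCriticalEdge_oneJoin_inl_inr_iff_alphaOn hA hB,
    isCriticalEdge_oneJoin_inl_inr_iff_alphaOn hA hK,
    isCriticalEdge_oneJoin_inl_inr_iff_alphaOn hB hK,
    insert_empty_eq, alphaOn_bot_unit_singleton, alphaOn_empty, Set.notMem_empty,
    not_false_eq_true, zero_add, and_true]

lemma isAlphaCritical_oneJoin_iff :
    IsAlphaCritical (oneJoin G H A B) ↔
      (∀ a b, G.Adj a b → IsCriticalEdge (oneJoin G H A B) (inl a) (inl b)) ∧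
      (∀ a b, H.Adj a b → IsCriticalEdge (oneJoin G H A B) (inr a) (inr b)) ∧
      ∀ x ∉ A, ∀ y ∉ B, IsCriticalEdge (oneJoin G H A B) (inl x) (inr y) := by
  refine ⟨fun h => ⟨fun a b hab => ?_, fun a b hab => ?_, fun x hx y hy => ?_⟩, ?_⟩
  · exact ⟨oneJoin_adj_inl_inl.2 hab, h _ _ (oneJoin_adj_inl_inl.2 hab)⟩
  · exact ⟨oneJoin_adj_inr_inr.2 hab, h _ _ (oneJoin_adj_inr_inr.2 hab)⟩
  · exact ⟨oneJoin_adj_inl_inr.2 ⟨hx, hy⟩, h _ _ (oneJoin_adj_inl_inr.2 ⟨hx, hy⟩)⟩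
  · rintro ⟨hG, hH, hGH⟩ (a | a) (b | b) hab
    · exact (hG a b (oneJoin_adj_inl_inl.1 hab)).2
    · exact (hGH a (oneJoin_adj_inl_inr.1 hab).1 b (oneJoin_adj_inl_inr.1 hab).2).2
    · rw [Sym2.eq_swap]
      exact (hGH b (oneJoin_adj_inr_inl.1 hab).1 a (oneJoin_adj_inr_inl.1 hab).2).2
    · exact (hH a b (oneJoin_adj_inr_inr.1 hab)).2

end critical

/-- `J = j(G, G₀, H, H₀)` is α-critical iff both
`G₁ = j(G, G₀, K₁, ∅)` and `H₁ = j(H, H₀, K₁, ∅)` are α-critical, where `K₁`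
is the one-vertex graph (a new vertex joined to all of `V(G) ∖ V(G₀)`). -/
theorem oneJoin_isAlphaCritical_iff {α β : Type*} [Fintype α] [Fintype β]
    (G : SimpleGraph α) (H : SimpleGraph β) (A : Set α) (B : Set β)
    (hA : alphaOn G A + 1 = alphaNum G) (hB : alphaOn H B + 1 = alphaNum H) :
    IsAlphaCritical (oneJoin G H A B) ↔
      (IsAlphaCritical (oneJoin G (⊥ : SimpleGraph Unit) A (∅ : Set Unit)) ∧
       IsAlphaCritical (oneJoin H (⊥ : SimpleGraph Unit) B (∅ : Set Unit))) := by
  obtain ⟨x₀, hx₀⟩ := exists_notMem_of_alphaOn_add_one_eq hA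
  obtain ⟨y₀, hy₀⟩ := exists_notMem_of_alphaOn_add_one_eq hB
  simp only [isAlphaCritical_oneJoin_iff, isCriticalEdge_oneJoin_inl_inl_iff hB,
    isCriticalEdge_oneJoin_inr_inr_iff hA, isCriticalEdge_oneJoin_inl_inr_iff hA hB, bot_adj,
    IsEmpty.forall_iff, implies_true, Set.notMem_empty, not_false_eq_true, forall_const,
    true_and]
  constructor
  · rintro ⟨hG, hH, hGH⟩
    exact ⟨⟨hG, fun x hx _ => (hGH x hx y₀ hy₀).1⟩, hH, fun y hy _ => (hGH x₀ hx₀ y hy).2⟩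
  · rintro ⟨⟨hG, hGx⟩, hH, hHy⟩
    exact ⟨hG, hH, fun x hx y hy => ⟨hGx x hx (), hHy y hy ()⟩⟩
end

section
/- Let G be a graph and v a vertex of G. If every edge of G incident with v is an α-critical edge of G, then the set S = V(G)∖N_G[v] induces a maximal induced subgraph of G with stability number α(G)−1. -/
open SimpleGraph

section Aux
variable {V : Type*} [Fintype V] (G : SimpleGraph V)

lemma alphaOn_bddAbove (S : Set V) :
    BddAbove {n | ∃ s : Finset V, ↑s ⊆ S ∧ (∀ u ∈ s, ∀ v ∈ s, ¬ G.Adj u v) ∧ s.card = n} :=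
  ⟨Fintype.card V, fun n ⟨s, _, _, hc⟩ => hc ▸ (by simpa using Finset.card_le_univ s)⟩

lemma card_le_alphaOn {S : Set V} {s : Finset V} (hs : ↑s ⊆ S)
    (hi : ∀ u ∈ s, ∀ v ∈ s, ¬ G.Adj u v) : s.card ≤ alphaOn G S :=
  le_csSup (alphaOn_bddAbove G S) ⟨s, hs, hi, rfl⟩

lemma alphaOn_exists (S : Set V) :
    ∃ s : Finset V, ↑s ⊆ S ∧ (∀ u ∈ s, ∀ v ∈ s, ¬ G.Adj u v) ∧ s.card = alphaOn G S := by
  have hne : {n | ∃ s : Finset V, ↑s ⊆ S ∧ (∀ u ∈ s, ∀ v ∈ s, ¬ G.Adj u v) ∧ s.card = n}.Nonempty :=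
    ⟨0, ∅, by simp, by simp, by simp⟩
  exact Nat.sSup_mem hne (alphaOn_bddAbove G S)

lemma alphaOn_le_alphaNum (S : Set V) : alphaOn G S ≤ alphaNum G := by
  obtain ⟨s, _, hi, hc⟩ := alphaOn_exists G S
  exact hc ▸ card_le_alphaOn G (by simp) hi

lemma indep_G_of_indep_del {v w : V} {I : Finset V}
    (hi : ∀ x ∈ I, ∀ y ∈ I, ¬ (G.deleteEdges {s(v, w)}).Adj x y)
    (hvw : v ∉ I ∨ w ∉ I) : ∀ x ∈ I, ∀ y ∈ I, ¬ G.Adj x y := by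
  intro x hx y hy hadj
  have h1 := hi x hx y hy
  simp only [SimpleGraph.deleteEdges_adj, Set.mem_singleton_iff, not_and, not_not] at h1
  have := h1 hadj
  rw [Sym2.eq_iff] at this
  rcases this with ⟨rfl, rfl⟩ | ⟨rfl, rfl⟩ <;> tauto

lemma exists_crit_set {v w : V} (hc : IsCriticalEdge G v w) :
    ∃ I : Finset V, v ∈ I ∧ w ∈ I ∧
      (∀ x ∈ I, ∀ y ∈ I, ¬ (G.deleteEdges {s(v, w)}).Adj x y) ∧
      I.card = alphaNum G + 1 := by
  obtain ⟨I, -, hi, hcard⟩ := alphaOn_exists (G.deleteEdges {s(v, w)}) Set.univ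
  have hcard' : I.card = alphaNum G + 1 := by
    rw [hcard]; exact hc.2
  have hmem : ∀ u : V, u = v ∨ u = w → u ∈ I := by
    intro u hu
    by_contra hnu
    have : ∀ x ∈ I, ∀ y ∈ I, ¬ G.Adj x y := by
      refine indep_G_of_indep_del G hi ?_
      rcases hu with rfl | rfl
      · exact Or.inl hnu
      · exact Or.inr hnu
    have hle := card_le_alphaOn G (S := Set.univ) (by simp) this
    have hdef : alphaNum G = alphaOn G Set.univ := rfl
    omega
  exact ⟨I, hmem v (Or.inl rfl), hmem w (Or.inr rfl), hi, hcard'⟩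

/-- Key step: there is an independent set of size `α(G) - 1` inside the
complement of the closed neighborhood of `v`. -/
lemma exists_indep_outside (v : V)
    (h : ∀ w, G.Adj v w → IsCriticalEdge G v w) :
    ∃ t : Finset V, ↑t ⊆ ((insert v (G.neighborSet v))ᶜ : Set V) ∧
      (∀ x ∈ t, ∀ y ∈ t, ¬ G.Adj x y) ∧ t.card + 1 = alphaNum G := by
  classical
  by_cases hiso : ∃ w, G.Adj v w
  · obtain ⟨w, hw⟩ := hiso
    obtain ⟨I, hvI, hwI, hi, hcard⟩ := exists_crit_set G (h w hw)
    refine ⟨(I.erase v).erase w, ?_, ?_, ?_⟩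
    · intro x hx
      have hx1 := Finset.mem_coe.1 hx
      have hxw : x ≠ w := (Finset.mem_erase.1 hx1).1
      have hxv : x ≠ v := (Finset.mem_erase.1 (Finset.mem_erase.1 hx1).2).1
      have hxI : x ∈ I := (Finset.mem_erase.1 (Finset.mem_erase.1 hx1).2).2
      simp only [Set.mem_compl_iff, Set.mem_insert_iff, SimpleGraph.mem_neighborSet]
      push_neg
      refine ⟨hxv, fun hadj => ?_⟩
      have h1 := hi v hvI x hxI
      simp only [SimpleGraph.deleteEdges_adj, Set.mem_singleton_iff, not_and, not_not] at h1
      have := h1 hadj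
      rw [Sym2.eq_iff] at this
      rcases this with ⟨-, h2⟩ | ⟨-, h2⟩
      · exact hxw h2
      · exact hxv h2
    · intro x hx y hy hadj
      have hx' := Finset.mem_erase.1 hx
      have hy' := Finset.mem_erase.1 hy
      have hx'' := Finset.mem_erase.1 hx'.2
      have hy'' := Finset.mem_erase.1 hy'.2
      have h1 := hi x hx''.2 y hy''.2
      simp only [SimpleGraph.deleteEdges_adj, Set.mem_singleton_iff, not_and, not_not] at h1
      have := h1 hadj
      rw [Sym2.eq_iff] at this
      rcases this with ⟨rfl, rfl⟩ | ⟨rfl, rfl⟩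
      · exact hx''.1 rfl
      · exact hy''.1 rfl
    · have hwmem : w ∈ I.erase v :=
        Finset.mem_erase.2 ⟨fun hwv => G.ne_of_adj hw hwv.symm, hwI⟩
      rw [Finset.card_erase_of_mem hwmem, Finset.card_erase_of_mem hvI, hcard]
      have h1 : 1 ≤ alphaOn G Set.univ := by
        have := card_le_alphaOn G (S := Set.univ) (s := {v}) (by simp) (by simp)
        simpa using this
      have hdef : alphaNum G = alphaOn G Set.univ := rfl
      omega
  · push_neg at hiso
    obtain ⟨I, -, hi, hcard⟩ := alphaOn_exists G Set.univ
    have hvI : v ∈ I := by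
      by_contra hv
      have hind : ∀ x ∈ insert v I, ∀ y ∈ insert v I, ¬ G.Adj x y := by
        intro x hx y hy
        rcases Finset.mem_insert.1 hx with rfl | hx' <;>
          rcases Finset.mem_insert.1 hy with rfl | hy'
        · simp
        · exact hiso y
        · exact fun hadj => hiso x hadj.symm
        · exact hi x hx' y hy'
      have hle := card_le_alphaOn G (S := Set.univ) (by simp) hind
      rw [Finset.card_insert_of_notMem hv] at hle
      have : alphaNum G = alphaOn G Set.univ := rfl
      omega
    refine ⟨I.erase v, ?_, ?_, ?_⟩
    · intro x hx
      have hx' := Finset.mem_erase.1 (Finset.mem_coe.1 hx)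
      simp only [Set.mem_compl_iff, Set.mem_insert_iff, SimpleGraph.mem_neighborSet]
      push_neg
      exact ⟨hx'.1, hiso x⟩
    · intro x hx y hy
      exact hi x (Finset.mem_erase.1 hx).2 y (Finset.mem_erase.1 hy).2
    · rw [Finset.card_erase_of_mem hvI, hcard]
      have h1 : 1 ≤ alphaOn G Set.univ := by
        have := card_le_alphaOn G (S := Set.univ) (s := {v}) (by simp) (by simp)
        simpa using this
      have : alphaNum G = alphaOn G Set.univ := rfl
      omega

end Aux

/-- If every edge of `G` incident with `v` is an α-critical edge of
`G`, then `S = V(G) ∖ N_G[v]` induces a maximal induced subgraph of `G` with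
stability number `α(G) - 1`. -/
theorem isMaxAlphaSub_of_critical_at_vertex {V : Type*} [Fintype V]
    (G : SimpleGraph V) (v : V)
    (h : ∀ w, G.Adj v w → IsCriticalEdge G v w) :
    IsMaxAlphaSub G ((insert v (G.neighborSet v))ᶜ) := by
  classical
  constructor
  · obtain ⟨t, hts, hti, htc⟩ := exists_indep_outside G v h
    have hge : t.card ≤ alphaOn G ((insert v (G.neighborSet v))ᶜ) :=
      card_le_alphaOn G hts hti
    have hle : alphaOn G ((insert v (G.neighborSet v))ᶜ) + 1 ≤ alphaNum G := by
      obtain ⟨s, hss, hsi, hsc⟩ := alphaOn_exists G ((insert v (G.neighborSet v))ᶜ)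
      have hvs : v ∉ s := fun hv => by simpa using hss hv
      have hind : ∀ x ∈ insert v s, ∀ y ∈ insert v s, ¬ G.Adj x y := by
        intro x hx y hy
        rcases Finset.mem_insert.1 hx with rfl | hx' <;>
          rcases Finset.mem_insert.1 hy with rfl | hy'
        · simp
        · intro hadj
          have := hss hy'
          simp only [Set.mem_compl_iff, Set.mem_insert_iff,
            SimpleGraph.mem_neighborSet] at this
          exact this (Or.inr hadj)
        · intro hadj
          have := hss hx'
          simp only [Set.mem_compl_iff, Set.mem_insert_iff,
            SimpleGraph.mem_neighborSet] at this
          exact this (Or.inr hadj.symm)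
        · exact hsi x hx' y hy'
      have := card_le_alphaOn G (S := Set.univ) (by simp) hind
      rw [Finset.card_insert_of_notMem hvs, hsc] at this
      exact this.trans_eq rfl
    omega
  · intro w hw
    simp only [Set.mem_compl_iff, Set.mem_insert_iff, SimpleGraph.mem_neighborSet,
      not_not] at hw
    have hle : alphaOn G (insert w ((insert v (G.neighborSet v))ᶜ)) ≤ alphaNum G :=
      alphaOn_le_alphaNum G _
    have hge : alphaNum G ≤ alphaOn G (insert w ((insert v (G.neighborSet v))ᶜ)) := by
      rcases hw with rfl | hadj
      · obtain ⟨t, hts, hti, htc⟩ := exists_indep_outside G w h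
        have hws : w ∉ t := fun hwt => by simpa using hts hwt
        have hind : ∀ x ∈ insert w t, ∀ y ∈ insert w t, ¬ G.Adj x y := by
          intro x hx y hy
          rcases Finset.mem_insert.1 hx with rfl | hx' <;>
            rcases Finset.mem_insert.1 hy with rfl | hy'
          · simp
          · intro hadj
            have := hts hy'
            simp only [Set.mem_compl_iff, Set.mem_insert_iff,
              SimpleGraph.mem_neighborSet] at this
            exact this (Or.inr hadj)
          · intro hadj
            have := hts hx'
            simp only [Set.mem_compl_iff, Set.mem_insert_iff,
              SimpleGraph.mem_neighborSet] at this
            exact this (Or.inr hadj.symm)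
          · exact hti x hx' y hy'
        have hsub : ↑(insert w t) ⊆ insert w ((insert w (G.neighborSet w))ᶜ : Set V) := by
          intro x hx
          rcases Finset.mem_insert.1 hx with rfl | hx'
          · exact Set.mem_insert _ _
          · exact Set.mem_insert_of_mem _ (hts hx')
        have := card_le_alphaOn G hsub hind
        rw [Finset.card_insert_of_notMem hws, htc] at this
        exact le_of_eq_of_le rfl this
      · obtain ⟨I, hvI, hwI, hi, hcard⟩ := exists_crit_set G (h w hadj)
        have hind : ∀ x ∈ I.erase v, ∀ y ∈ I.erase v, ¬ G.Adj x y := by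
          intro x hx y hy hGadj
          have hx' := Finset.mem_erase.1 hx
          have hy' := Finset.mem_erase.1 hy
          have h1 := hi x hx'.2 y hy'.2
          simp only [SimpleGraph.deleteEdges_adj, Set.mem_singleton_iff, not_and,
            not_not] at h1
          have := h1 hGadj
          rw [Sym2.eq_iff] at this
          rcases this with ⟨rfl, rfl⟩ | ⟨rfl, rfl⟩
          · exact hx'.1 rfl
          · exact hy'.1 rfl
        have hsub : ↑(I.erase v) ⊆ insert w ((insert v (G.neighborSet v))ᶜ : Set V) := by
          intro x hx
          have hx' := Finset.mem_erase.1 (Finset.mem_coe.1 hx)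
          by_cases hxw : x = w
          · exact hxw ▸ Set.mem_insert _ _
          · refine Set.mem_insert_of_mem _ ?_
            simp only [Set.mem_compl_iff, Set.mem_insert_iff, SimpleGraph.mem_neighborSet]
            push_neg
            refine ⟨hx'.1, fun hGadj => ?_⟩
            have h1 := hi v hvI x hx'.2
            simp only [SimpleGraph.deleteEdges_adj, Set.mem_singleton_iff, not_and,
              not_not] at h1
            have := h1 hGadj
            rw [Sym2.eq_iff] at this
            rcases this with ⟨-, h2⟩ | ⟨-, h2⟩
            · exact hxw h2
            · exact hx'.1 h2
        have := card_le_alphaOn G hsub hind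
        rw [Finset.card_erase_of_mem hvI, hcard] at this
        omega
    omega
end
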